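/- Let n ≥ 3 and let G be the graph on vertex set A ∪ B, where A = {a₁,…,a_n} and B = {b₁,…,b_n} each induce a complete graph K_n, and aᵢ is adjacent to b_j if and only if i = j (two cliques joined by a perfect matching). Then for every 2-subcoloring μ of G and every 1 ≤ i ≤ n, one has μ(aᵢ) ≠ μ(bᵢ). -/
import Mathlib


/-- A `k`-subcoloring of a simple graph `G`: every color class induces a
disjoint union of cliques. -/
def IsSubcoloring {V : Type*} {k : ℕ} (G : SimpleGraph V) (μ : V → Fin k) : Prop :=
  ∀ u v w : V, μ u = μ v → μ v = μ w → G.Adj u v → G.Adj v w → u ≠ w → G.Adj u w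

lemma fin2_eq_of_ne {x y c : Fin 2} (hx : x ≠ c) (hy : y ≠ c) : x = y := by
  omega

/-- Two cliques of size `n ≥ 3` joined by a perfect matching
(`(i, false) = aᵢ`, `(i, true) = bᵢ`; cross edges only between `aᵢ` and `bᵢ`):
in any 2-subcoloring, matched vertices receive different colors. -/
theorem two_cliques_matching_two_subcoloring
    (n : ℕ) (hn : 3 ≤ n) (G : SimpleGraph (Fin n × Bool))
    (hG : ∀ p q : Fin n × Bool, G.Adj p q ↔ p ≠ q ∧ (p.2 = q.2 ∨ p.1 = q.1))
    (μ : Fin n × Bool → Fin 2) (hμ : IsSubcoloring G μ) :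
    ∀ i : Fin n, μ (i, false) ≠ μ (i, true) := by
  intro i h
  -- every vertex with index ≠ i avoids color c := μ (i, false)
  have key : ∀ j : Fin n, j ≠ i → ∀ t : Bool, μ (j, t) ≠ μ (i, false) := by
    intro j hj t ht
    cases t with
    | false =>
      have hadj := hμ (j, false) (i, false) (i, true) ht h
        ((hG _ _).mpr ⟨by simp [hj], Or.inl rfl⟩)
        ((hG _ _).mpr ⟨by simp, Or.inr rfl⟩)
        (by simp)
      rcases ((hG _ _).mp hadj).2 with h' | h'
      · simp at h'
      · exact hj h'
    | true =>
      have hadj := hμ (j, true) (i, true) (i, false) (h ▸ ht) h.symm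
        ((hG _ _).mpr ⟨by simp [hj], Or.inl rfl⟩)
        ((hG _ _).mpr ⟨by simp, Or.inr rfl⟩)
        (by simp)
      rcases ((hG _ _).mp hadj).2 with h' | h'
      · simp at h'
      · exact hj h'
  -- pick two distinct indices j k ≠ i
  obtain ⟨j, k, hj, hk, hjk⟩ : ∃ j k : Fin n, j ≠ i ∧ k ≠ i ∧ j ≠ k := by
    have h2 : 1 < (Finset.univ.erase i).card := by
      rw [Finset.card_erase_of_mem (Finset.mem_univ i), Finset.card_univ, Fintype.card_fin]
      omega
    obtain ⟨j, hj, k, hk, hjk⟩ := Finset.one_lt_card.mp h2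
    exact ⟨j, k, Finset.ne_of_mem_erase hj, Finset.ne_of_mem_erase hk, hjk⟩
  have e1 : μ (k, false) = μ (j, false) :=
    fin2_eq_of_ne (key k hk false) (key j hj false)
  have e2 : μ (j, false) = μ (j, true) :=
    fin2_eq_of_ne (key j hj false) (key j hj true)
  have hadj := hμ (k, false) (j, false) (j, true) e1 e2
    ((hG _ _).mpr ⟨by simp [hjk.symm], Or.inl rfl⟩)
    ((hG _ _).mpr ⟨by simp, Or.inr rfl⟩)
    (by simp [hjk.symm])
  rcases ((hG _ _).mp hadj).2 with h' | h'
  · simp at h'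
  · exact hjk h'.symm
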